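/- Let N ≥ 2 be an integer and M = 4^{N+1}. Consider the zero-size instance over colors {white, red, blue} consisting of phase 0 (M white items) followed by phases i = 1, …, N, where phase i consists of a_i·M/2 red items, then (1 − a_i/2)·M blue items, then M white items, with a_i = 2 − (3/4)^{i−1}. Then OPT = M for this instance, and every run of BaP uses exactly (2 − (3/4)^N)·M bins. Consequently, the asymptotic competitive ratio of BaP restricted to zero-size items is at least 2. -/

import Mathlib

/-- The three colors used in the construction. -/
inductive Color3 : Type
  | white
  | red
  | blue
deriving DecidableEq

/-- The number of red items in phase `i` (for `1 ≤ i ≤ N`) of the adversarial zero-size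
instance: `a_i·M/2 = 4^(N+1) − 2·3^(i−1)·4^(N−i+1)`, where `M = 4^(N+1)` and
`a_i = 2 − (3/4)^(i−1)`. -/
def redCount (N i : ℕ) : ℕ := 4 ^ (N + 1) - 2 * 3 ^ (i - 1) * 4 ^ (N - i + 1)

/-- The color of item `t` (1-based) of the adversarial zero-size instance with parameter `N`:
phase `0` consists of `M = 4^(N+1)` white items, and phase `i` (for `1 ≤ i ≤ N`) consists of
`a_i·M/2` red items, then `(1 − a_i/2)·M` blue items, then `M` white items. -/
def advColor (N : ℕ) (t : ℕ) : Color3 :=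
  if t ≤ 4 ^ (N + 1) then Color3.white
  else
    let i := (t - 4 ^ (N + 1) - 1) / (2 * 4 ^ (N + 1)) + 1
    let r := (t - 4 ^ (N + 1) - 1) % (2 * 4 ^ (N + 1)) + 1
    if r ≤ redCount N i then Color3.red
    else if r ≤ 4 ^ (N + 1) then Color3.blue
    else Color3.white

/-- A packing of the instance with `n` items, sizes `s` and colors `c` (items are indexed
`1,…,n`) into bins `1,…,L`: each bin has total size at most `1`, and two items packed
consecutively into the same bin have different colors. -/
def IsPacking {γ : Type*} (n L : ℕ) (s : ℕ → ℝ) (c : ℕ → γ) (f : ℕ → ℕ) : Prop :=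
  (∀ t, 1 ≤ t → t ≤ n → 1 ≤ f t ∧ f t ≤ L) ∧
  (∀ b, (∑ l ∈ (Finset.Icc 1 n).filter fun l => f l = b, s l) ≤ 1) ∧
  (∀ i j, 1 ≤ i → i < j → j ≤ n → f i = f j →
    (∀ l, i < l → l < j → f l ≠ f i) → c i ≠ c j)

/-- `OPTcost n s c` is the minimum number of bins over all packings of the instance. -/
noncomputable def OPTcost {γ : Type*} (n : ℕ) (s : ℕ → ℝ) (c : ℕ → γ) : ℕ :=
  sInf {L | ∃ f, IsPacking n L s c f}

/-- A run of the algorithm Balanced-Pseudo (BaP) on an instance of `n` items with colors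
`color 1, …, color n`.  `assign t` is the (1-based) index of the pseudo-bin receiving item `t`,
`nbins t` is the number of pseudo-bins after items `1,…,t` have been processed, and
`bcolor t j` is the color of pseudo-bin `j` after items `1,…,t` have been processed
(the color of the last item assigned to it).  When item `t` arrives, either all existing
pseudo-bins have color `color t` and a new pseudo-bin is opened, or item `t` is assigned to an
existing pseudo-bin whose color `g` differs from `color t` and is such that the number of
pseudo-bins of color `g` is maximal among colors different from `color t` (ties arbitrary). -/
structure BaPRun (n : ℕ) {γ : Type*} [DecidableEq γ] (color : ℕ → γ) where
  assign : ℕ → ℕ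
  nbins : ℕ → ℕ
  bcolor : ℕ → ℕ → γ
  nbins_zero : nbins 0 = 0
  step : ∀ t, 1 ≤ t → t ≤ n →
    (assign t = nbins (t - 1) + 1 ∧ nbins t = nbins (t - 1) + 1 ∧
      ∀ j, 1 ≤ j → j ≤ nbins (t - 1) → bcolor (t - 1) j = color t) ∨
    (1 ≤ assign t ∧ assign t ≤ nbins (t - 1) ∧ nbins t = nbins (t - 1) ∧
      bcolor (t - 1) (assign t) ≠ color t ∧
      ∀ g, g ≠ color t →
        ((Finset.Icc 1 (nbins (t - 1))).filter fun j => bcolor (t - 1) j = g).card ≤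
          ((Finset.Icc 1 (nbins (t - 1))).filter fun j =>
            bcolor (t - 1) j = bcolor (t - 1) (assign t)).card)
  bcolor_step : ∀ t, 1 ≤ t → t ≤ n → ∀ j,
    bcolor t j = if j = assign t then color t else bcolor (t - 1) j

/-- `R.Y m` is the index of the first item assigned to pseudo-bin `m`. -/
noncomputable def BaPRun.Y {n : ℕ} {γ : Type*} [DecidableEq γ] {c : ℕ → γ}
    (R : BaPRun n c) (m : ℕ) : ℕ :=
  sInf {t | 1 ≤ t ∧ t ≤ n ∧ R.assign t = m}

/-- The number of pseudo-bins of color `g` just after items `1,…,t` have been processed. -/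
def BaPRun.binsOfColor {n : ℕ} {γ : Type*} [DecidableEq γ] {c : ℕ → γ}
    (R : BaPRun n c) (t : ℕ) (g : γ) : ℕ :=
  ((Finset.Icc 1 (R.nbins t)).filter fun j => R.bcolor t j = g).card

/-- Number of further bins opened by Next Fit on the list `l` of item sizes when the current
bin already has load `load`. -/
noncomputable def nfExtra : List ℝ → ℝ → ℕ
  | [], _ => 0
  | a :: l, load => if load + a ≤ 1 then nfExtra l (load + a) else 1 + nfExtra l a

/-- Number of bins used by Next Fit on the list `l` of item sizes. -/
noncomputable def nfBins : List ℝ → ℕ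
  | [] => 0
  | a :: l => 1 + nfExtra l a

/-- The total number of (actual) bins used by the run `R` of BaP: the items of each pseudo-bin
are split into bins, in order, by Next Fit. -/
noncomputable def bapCost {n : ℕ} {γ : Type*} [DecidableEq γ] {c : ℕ → γ}
    (s : ℕ → ℝ) (R : BaPRun n c) : ℕ :=
  ∑ j ∈ Finset.Icc 1 (R.nbins n),
    nfBins ((((Finset.Icc 1 n).filter fun t => R.assign t = j).sort (· ≤ ·)).map s)

/-!
On zero-size items every pseudo-bin is a single bin, so BaP pays its final number of
pseudo-bins, and on this instance the run is forced. Write `M = 4 ^ (N + 1)`. After phase `i`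
all pseudo-bins are white and there are `(2 - (3/4)^i)·M` of them. In phase `i + 1` the red
items recolor white bins; each blue item recolors a bin of the larger of the white and red
classes, so these end up balanced; the white items then recolor every red and blue bin and open
new bins for the rest. The deficit `2M - #bins` shrinks by the factor `3/4` in each phase.

`OPT = M`: the first `M` (white) items need pairwise distinct bins, and since items `t` and
`t + M` always have different colors, dealing the items round-robin into `M` bins is a packing.
-/
open Finset Filter

theorem card_filter_ite_add {γ : Type*} [DecidableEq γ] {s : Finset ℕ} {a : ℕ} (ha : a ∈ s)
    (f : ℕ → γ) (x g : γ) :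
    #{j ∈ s | (if j = a then x else f j) = g} + (if f a = g then 1 else 0) =
      #{j ∈ s | f j = g} + (if x = g then 1 else 0) := by
  have hrest : {j ∈ s.erase a | (if j = a then x else f j) = g} = {j ∈ s.erase a | f j = g} :=
    filter_congr fun j hj => by rw [if_neg (ne_of_mem_erase hj)]
  have hnot : a ∉ {j ∈ s.erase a | f j = g} := by simp
  rw [← insert_erase ha, filter_insert, filter_insert, if_pos rfl, hrest]
  split_ifs <;> simp_all [card_insert_of_notMem hnot]

namespace BaPRun

section Step

variable {n : ℕ} {γ : Type*} [DecidableEq γ] {c : ℕ → γ} (R : BaPRun n c)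

theorem binsOfColor_pos {t j : ℕ} (hj₁ : 1 ≤ j) (hj₂ : j ≤ R.nbins t) :
    0 < R.binsOfColor t (R.bcolor t j) :=
  card_pos.2 ⟨j, by simp [hj₁, hj₂]⟩

theorem binsOfColor_eq_zero_iff {t : ℕ} {g : γ} :
    R.binsOfColor t g = 0 ↔ ∀ j, 1 ≤ j → j ≤ R.nbins t → R.bcolor t j ≠ g := by
  simp [binsOfColor, filter_eq_empty_iff, and_imp]

theorem binsOfColor_succ_of_assign {t : ℕ} (ht : t + 1 ≤ n)
    (hex : ∃ g ≠ c (t + 1), 0 < R.binsOfColor t g) :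
    ∃ g₀ ≠ c (t + 1), 0 < R.binsOfColor t g₀ ∧
      (∀ g ≠ c (t + 1), R.binsOfColor t g ≤ R.binsOfColor t g₀) ∧
      R.nbins (t + 1) = R.nbins t ∧
      ∀ g, R.binsOfColor (t + 1) g + (if g₀ = g then 1 else 0) =
        R.binsOfColor t g + (if c (t + 1) = g then 1 else 0) := by
  have hstep := R.step (t + 1) (by omega) ht
  simp only [Nat.add_sub_cancel] at hstep
  rcases hstep with ⟨-, -, hall⟩ | ⟨ha₁, ha₂, hnb, hne, hmax⟩
  · obtain ⟨g, hg, hpos⟩ := hex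
    exact absurd (R.binsOfColor_eq_zero_iff.2 fun j hj₁ hj₂ => hall j hj₁ hj₂ ▸ hg.symm)
      hpos.ne'
  · refine ⟨_, hne, R.binsOfColor_pos ha₁ ha₂, hmax, hnb, fun g => ?_⟩
    have hcol : R.bcolor (t + 1) = fun j => if j = R.assign (t + 1) then c (t + 1)
        else R.bcolor t j := funext (R.bcolor_step (t + 1) (by omega) ht)
    simp only [binsOfColor, hnb, hcol]
    exact card_filter_ite_add (by simp [ha₁, ha₂]) _ _ _

theorem binsOfColor_succ_of_open {t : ℕ} (ht : t + 1 ≤ n)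
    (hall : ∀ g ≠ c (t + 1), R.binsOfColor t g = 0) :
    R.nbins (t + 1) = R.nbins t + 1 ∧ R.binsOfColor (t + 1) (c (t + 1)) = R.nbins (t + 1) ∧
      ∀ g ≠ c (t + 1), R.binsOfColor (t + 1) g = 0 := by
  have hstep := R.step (t + 1) (by omega) ht
  simp only [Nat.add_sub_cancel] at hstep
  rcases hstep with ⟨ha, hnb, hold⟩ | ⟨ha₁, ha₂, -, hne, -⟩
  · have hmono : ∀ j, 1 ≤ j → j ≤ R.nbins (t + 1) → R.bcolor (t + 1) j = c (t + 1) := by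
      intro j hj₁ hj₂
      rw [R.bcolor_step (t + 1) (by omega) ht j]
      split_ifs
      · rfl
      · exact hold j hj₁ (by omega)
    refine ⟨hnb, ?_, fun g hg => R.binsOfColor_eq_zero_iff.2 fun j hj₁ hj₂ =>
      (hmono j hj₁ hj₂).trans_ne hg.symm⟩
    rw [binsOfColor, filter_true_of_mem fun j hj => hmono j (mem_Icc.1 hj).1 (mem_Icc.1 hj).2,
      Nat.card_Icc, Nat.add_sub_cancel]
  · exact absurd (hall _ hne) (R.binsOfColor_pos ha₁ ha₂).ne'

end Step

section Color3

variable {n : ℕ} {c : ℕ → Color3} (R : BaPRun n c)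

def IsAllWhite (t m : ℕ) : Prop :=
  R.nbins t = m ∧ R.binsOfColor t .white = m ∧ R.binsOfColor t .red = 0 ∧
    R.binsOfColor t .blue = 0

theorem isAllWhite_zero : R.IsAllWhite 0 0 := by
  simp [IsAllWhite, binsOfColor, R.nbins_zero]

theorem red_segment {t₀ t₁ m : ℕ} (ht : t₀ ≤ t₁) (hn : t₁ ≤ n) (hm : t₁ ≤ t₀ + m)
    (hc : ∀ t, t₀ < t → t ≤ t₁ → c t = .red) (h₀ : R.IsAllWhite t₀ m) :
    R.nbins t₁ = m ∧ R.binsOfColor t₁ .white = m - (t₁ - t₀) ∧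
      R.binsOfColor t₁ .red = t₁ - t₀ ∧ R.binsOfColor t₁ .blue = 0 := by
  induction t₁, ht using Nat.le_induction with
  | base => simpa [IsAllWhite] using h₀
  | succ t ht ih =>
    obtain ⟨hnb, hw, hr, hb⟩ := ih (by omega) (by omega) fun s hs hst => hc s hs (by omega)
    have hct : c (t + 1) = .red := hc _ (by omega) le_rfl
    obtain ⟨g₀, hg₀, hpos, -, hnb', hcount⟩ :=
      R.binsOfColor_succ_of_assign hn ⟨.white, by simp [hct], by omega⟩
    obtain rfl : g₀ = .white := by cases g₀ <;> simp_all
    have := hcount .white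
    have := hcount .red
    have := hcount .blue
    simp only [hct, reduceCtorEq, if_true, if_false] at *
    omega

theorem blue_segment {t₀ t₁ m k : ℕ} (ht : t₀ ≤ t₁) (hn : t₁ ≤ n) (hk : t₁ ≤ t₀ + 2 * k)
    (hc : ∀ t, t₀ < t → t ≤ t₁ → c t = .blue)
    (h₀ : R.nbins t₀ = m ∧ R.binsOfColor t₀ .white = k ∧ R.binsOfColor t₀ .red = k ∧
      R.binsOfColor t₀ .blue = 0) :
    R.nbins t₁ = m ∧ R.binsOfColor t₁ .white + R.binsOfColor t₁ .red + (t₁ - t₀) = 2 * k ∧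
      R.binsOfColor t₁ .white ≤ R.binsOfColor t₁ .red + 1 ∧
      R.binsOfColor t₁ .red ≤ R.binsOfColor t₁ .white + 1 ∧
      R.binsOfColor t₁ .blue = t₁ - t₀ := by
  induction t₁, ht using Nat.le_induction with
  | base => obtain ⟨h₁, h₂, h₃, h₄⟩ := h₀; simp [h₁, h₂, h₃, h₄]; omega
  | succ t ht ih =>
    obtain ⟨hnb, hwr, hwr₁, hrw₁, hb⟩ :=
      ih (by omega) (by omega) fun s hs hst => hc s hs (by omega)
    have hct : c (t + 1) = .blue := hc _ (by omega) le_rfl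
    have hex : ∃ g ≠ c (t + 1), 0 < R.binsOfColor t g := by
      rcases Nat.eq_zero_or_pos (R.binsOfColor t .white) with h | h
      · exact ⟨.red, by simp [hct], by omega⟩
      · exact ⟨.white, by simp [hct], h⟩
    obtain ⟨g₀, hg₀, hpos, hmax, hnb', hcount⟩ := R.binsOfColor_succ_of_assign hn hex
    have := hmax .white (by simp [hct])
    have := hmax .red (by simp [hct])
    have := hcount .white
    have := hcount .red
    have := hcount .blue
    cases g₀ <;> simp only [hct, reduceCtorEq, if_true, if_false, ne_eq, not_true] at * <;> omega

theorem white_convert_segment {t₀ t₁ : ℕ} (ht : t₀ ≤ t₁) (hn : t₁ ≤ n)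
    (hk : t₁ ≤ t₀ + (R.binsOfColor t₀ .red + R.binsOfColor t₀ .blue))
    (hc : ∀ t, t₀ < t → t ≤ t₁ → c t = .white) :
    R.nbins t₁ = R.nbins t₀ ∧
      R.binsOfColor t₁ .white = R.binsOfColor t₀ .white + (t₁ - t₀) ∧
      R.binsOfColor t₁ .red + R.binsOfColor t₁ .blue + (t₁ - t₀) =
        R.binsOfColor t₀ .red + R.binsOfColor t₀ .blue := by
  induction t₁, ht using Nat.le_induction with
  | base => simp
  | succ t ht ih =>
    obtain ⟨hnb, hw, hrb⟩ := ih (by omega) (by omega) fun s hs hst => hc s hs (by omega)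
    have hct : c (t + 1) = .white := hc _ (by omega) le_rfl
    have hex : ∃ g ≠ c (t + 1), 0 < R.binsOfColor t g := by
      rcases Nat.eq_zero_or_pos (R.binsOfColor t .red) with h | h
      · exact ⟨.blue, by simp [hct], by omega⟩
      · exact ⟨.red, by simp [hct], h⟩
    obtain ⟨g₀, hg₀, hpos, -, hnb', hcount⟩ := R.binsOfColor_succ_of_assign hn hex
    have := hcount .white
    have := hcount .red
    have := hcount .blue
    cases g₀ <;> simp only [hct, reduceCtorEq, if_true, if_false, ne_eq, not_true] at * <;> omega

theorem white_open_segment {t₀ t₁ m : ℕ} (ht : t₀ ≤ t₁) (hn : t₁ ≤ n)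
    (hc : ∀ t, t₀ < t → t ≤ t₁ → c t = .white) (h₀ : R.IsAllWhite t₀ m) :
    R.IsAllWhite t₁ (m + (t₁ - t₀)) := by
  induction t₁, ht using Nat.le_induction with
  | base => simpa using h₀
  | succ t ht ih =>
    obtain ⟨hnb, hw, hr, hb⟩ := ih (by omega) fun s hs hst => hc s hs (by omega)
    have hct : c (t + 1) = .white := hc _ (by omega) le_rfl
    obtain ⟨hnb', hw', hother⟩ := R.binsOfColor_succ_of_open hn fun g hg => by
      cases g <;> simp_all
    rw [hct] at hw' hother
    exact ⟨by omega, by omega, hother .red (by simp), hother .blue (by simp)⟩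

theorem isAllWhite_phase {t₀ A u : ℕ} (hu : 16 * u ≤ A) (hn : t₀ + 2 * A ≤ n)
    (hred : ∀ t, t₀ < t → t ≤ t₀ + (A - 8 * u) → c t = .red)
    (hblue : ∀ t, t₀ + (A - 8 * u) < t → t ≤ t₀ + A → c t = .blue)
    (hwhite : ∀ t, t₀ + A < t → t ≤ t₀ + 2 * A → c t = .white)
    (h₀ : R.IsAllWhite t₀ (2 * A - 16 * u)) :
    R.IsAllWhite (t₀ + 2 * A) (2 * A - 12 * u) := by
  obtain ⟨n₁, w₁, r₁, b₁⟩ :=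
    R.red_segment (t₁ := t₀ + (A - 8 * u)) (by omega) (by omega) (by omega) hred h₀
  obtain ⟨n₂, wr₂, hwr₂, hrw₂, b₂⟩ := R.blue_segment (t₁ := t₀ + A) (k := A - 8 * u)
    (by omega) (by omega) (by omega) hblue ⟨n₁, by omega, by omega, b₁⟩
  obtain ⟨n₃, w₃, rb₃⟩ := R.white_convert_segment (t₀ := t₀ + A) (t₁ := t₀ + (2 * A - 4 * u))
    (by omega) (by omega) (by omega) fun t h₁ h₂ => hwhite t (by omega) (by omega)
  have h₃ : R.IsAllWhite (t₀ + (2 * A - 4 * u)) (2 * A - 16 * u) :=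
    ⟨by omega, by omega, by omega, by omega⟩
  have h₄ := R.white_open_segment (t₁ := t₀ + 2 * A) (by omega) hn
    (fun t h₁ h₂ => hwhite t (by omega) h₂) h₃
  convert h₄ using 2
  omega

end Color3

end BaPRun

theorem nfExtra_map_zero {α : Type*} (l : List α) {load : ℝ} (h : load ≤ 1) :
    nfExtra (l.map fun _ => 0) load = 0 := by
  induction l with
  | nil => rfl
  | cons a l ih => simp only [List.map_cons, nfExtra, add_zero, if_pos h, ih]

theorem nfBins_map_zero {α : Type*} {l : List α} (hl : l ≠ []) :
    nfBins (l.map fun _ => 0) = 1 := by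
  obtain ⟨a, l, rfl⟩ := List.exists_cons_of_ne_nil hl
  simp only [List.map_cons, nfBins, nfExtra_map_zero l zero_le_one]

namespace BaPRun

variable {n : ℕ} {γ : Type*} [DecidableEq γ] {c : ℕ → γ} (R : BaPRun n c)

theorem exists_assign_eq {t j : ℕ} (ht : t ≤ n) (hj₁ : 1 ≤ j) (hj₂ : j ≤ R.nbins t) :
    ∃ s, 1 ≤ s ∧ s ≤ t ∧ R.assign s = j := by
  induction t with
  | zero => simp [R.nbins_zero] at hj₂; omega
  | succ t ih =>
    by_cases hj : j ≤ R.nbins t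
    · obtain ⟨s, hs₁, hs₂, hs₃⟩ := ih (by omega) hj
      exact ⟨s, hs₁, by omega, hs₃⟩
    · have hstep := R.step (t + 1) (by omega) ht
      simp only [Nat.add_sub_cancel] at hstep
      rcases hstep with ⟨ha, hnb, -⟩ | ⟨-, -, hnb, -⟩
      · exact ⟨t + 1, by omega, le_rfl, by omega⟩
      · omega

theorem bapCost_zero : bapCost (fun _ => 0) R = R.nbins n := by
  have hone : ∀ j ∈ Icc 1 (R.nbins n),
      nfBins (({t ∈ Icc 1 n | R.assign t = j}.sort (· ≤ ·)).map fun _ => (0 : ℝ)) = 1 := by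
    intro j hj
    obtain ⟨t, ht₁, ht₂, ht₃⟩ := R.exists_assign_eq le_rfl (mem_Icc.1 hj).1 (mem_Icc.1 hj).2
    exact nfBins_map_zero
      (List.ne_nil_of_mem ((mem_sort _).2 (mem_filter.2 ⟨mem_Icc.2 ⟨ht₁, ht₂⟩, ht₃⟩)))
  rw [bapCost, sum_congr rfl hone, sum_const, Nat.card_Icc, smul_eq_mul, mul_one,
    Nat.add_sub_cancel]

end BaPRun

section Packing

variable {γ : Type*} {n L : ℕ} {s : ℕ → ℝ} {c : ℕ → γ} {f : ℕ → ℕ}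

theorem IsPacking.ne_of_lt (hf : IsPacking n L s c f) {a b : ℕ} (ha : 1 ≤ a) (hab : a < b)
    (hb : b ≤ n) (hc : ∀ l, a < l → l ≤ b → c l = c a) : f a ≠ f b := by
  classical
  intro hfab
  have hex : ∃ l, a < l ∧ l ≤ b ∧ f l = f a := ⟨b, hab, le_rfl, hfab.symm⟩
  obtain ⟨h₁, h₂, h₃⟩ := Nat.find_spec hex
  exact hf.2.2 a _ ha h₁ (h₂.trans hb) h₃.symm
    (fun l hl₁ hl₂ hfl => Nat.find_min hex hl₂ ⟨hl₁, by omega, hfl⟩) (hc _ h₁ h₂).symm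

theorem IsPacking.le_of_forall_color_eq (hf : IsPacking n L s c f) {m : ℕ} (hm : m ≤ n)
    (hc : ∀ t, 1 ≤ t → t ≤ m → c t = c 1) : m ≤ L := by
  have hsame : ∀ a b, 1 ≤ a → b ≤ m → ∀ l, a < l → l ≤ b → c l = c a :=
    fun a b ha hb l hl₁ hl₂ => (hc l (by omega) (by omega)).trans (hc a ha (by omega)).symm
  have hinj : Set.InjOn f (Icc 1 m) := by
    intro a ha b hb hab
    simp only [coe_Icc, Set.mem_Icc] at ha hb
    by_contra hne
    rcases lt_or_gt_of_ne hne with h | h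
    · exact hf.ne_of_lt ha.1 h (by omega) (hsame a b ha.1 hb.2) hab
    · exact hf.ne_of_lt hb.1 h (by omega) (hsame b a hb.1 ha.2) hab.symm
  simpa using card_le_card_of_injOn (t := Icc 1 L) f
    (fun a ha => by simp only [coe_Icc, Set.mem_Icc] at ha ⊢; exact hf.1 a ha.1 (by omega)) hinj

theorem isPacking_roundRobin (hL : 0 < L) (hc : ∀ t, 1 ≤ t → t + L ≤ n → c (t + L) ≠ c t) :
    IsPacking n L (fun _ => 0) c fun t => (t - 1) % L + 1 := by
  refine ⟨fun t _ _ => ⟨Nat.le_add_left _ _, Nat.mod_lt _ hL⟩, fun _ => by simp, ?_⟩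
  intro i j hi hij hj hfij hgap
  simp only at hfij
  have hdvd : L ∣ j - i := by
    have := Nat.sub_mod_eq_zero_of_mod_eq (m := j - 1) (n := i - 1) (k := L) (by omega)
    rwa [show j - 1 - (i - 1) = j - i by omega, ← Nat.dvd_iff_mod_eq_zero] at this
  have hji : j = i + L := by
    have := Nat.le_of_dvd (by omega) hdvd
    by_contra hne
    refine hgap (i + L) (by omega) (by omega) ?_
    simp only [show i + L - 1 = i - 1 + L by omega, Nat.add_mod_right]
  subst hji
  exact (hc i hi hj).symm

theorem OPTcost_eq (hf : IsPacking n L s c f)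
    (hmin : ∀ L' f', IsPacking n L' s c f' → L ≤ L') : OPTcost n s c = L :=
  le_antisymm (Nat.sInf_le ⟨f, hf⟩) (le_csInf ⟨L, f, hf⟩ fun L' ⟨f', hf'⟩ => hmin L' f' hf')

end Packing

section Instance

variable (N : ℕ)

theorem advColor_of_le {t : ℕ} (ht : t ≤ 4 ^ (N + 1)) : advColor N t = .white := if_pos ht

theorem advColor_phase {q p : ℕ} (hp₁ : 1 ≤ p) (hp₂ : p ≤ 2 * 4 ^ (N + 1)) :
    advColor N (4 ^ (N + 1) + 2 * 4 ^ (N + 1) * q + p) =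
      if p ≤ redCount N (q + 1) then .red else if p ≤ 4 ^ (N + 1) then .blue else .white := by
  have hM : 0 < 4 ^ (N + 1) := by positivity
  have hdiv : (2 * 4 ^ (N + 1) * q + (p - 1)) / (2 * 4 ^ (N + 1)) = q := by
    rw [Nat.mul_add_div (by omega), Nat.div_eq_of_lt (by omega), add_zero]
  have hmod : (2 * 4 ^ (N + 1) * q + (p - 1)) % (2 * 4 ^ (N + 1)) = p - 1 := by
    rw [Nat.mul_add_mod, Nat.mod_eq_of_lt (by omega)]
  simp only [advColor]
  rw [if_neg (by omega), show 4 ^ (N + 1) + 2 * 4 ^ (N + 1) * q + p - 4 ^ (N + 1) - 1 =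
    2 * 4 ^ (N + 1) * q + (p - 1) by omega, hdiv, hmod, Nat.sub_add_cancel hp₁]

theorem advColor_phase_eq_white_iff {q p : ℕ} (hp₁ : 1 ≤ p) (hp₂ : p ≤ 2 * 4 ^ (N + 1)) :
    advColor N (4 ^ (N + 1) + 2 * 4 ^ (N + 1) * q + p) = .white ↔ 4 ^ (N + 1) < p := by
  have hred : redCount N (q + 1) ≤ 4 ^ (N + 1) := Nat.sub_le _ _
  rw [advColor_phase N hp₁ hp₂]
  split_ifs <;> simp <;> omega

theorem exists_eq_phase {t : ℕ} (ht : 4 ^ (N + 1) < t) :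
    ∃ q p, 1 ≤ p ∧ p ≤ 2 * 4 ^ (N + 1) ∧ t = 4 ^ (N + 1) + 2 * 4 ^ (N + 1) * q + p := by
  have hM : 0 < 2 * 4 ^ (N + 1) := by positivity
  refine ⟨(t - 4 ^ (N + 1) - 1) / (2 * 4 ^ (N + 1)), (t - 4 ^ (N + 1) - 1) % (2 * 4 ^ (N + 1)) + 1,
    by omega, Nat.mod_lt _ hM, ?_⟩
  have := Nat.div_add_mod (t - 4 ^ (N + 1) - 1) (2 * 4 ^ (N + 1))
  omega

theorem advColor_add_ne {t : ℕ} (ht : 1 ≤ t) :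
    advColor N (t + 4 ^ (N + 1)) ≠ advColor N t := by
  have hne : ∀ {a b : Color3}, (a = .white ↔ ¬ b = .white) → a ≠ b := by
    intro a b h hab; subst hab; tauto
  rcases le_or_gt t (4 ^ (N + 1)) with hle | hlt
  · have h := advColor_phase_eq_white_iff N (q := 0) ht (by omega)
    rw [mul_zero, add_zero, add_comm] at h
    exact hne (by rw [h, advColor_of_le N hle]; simpa using hle)
  · obtain ⟨q, p, hp₁, hp₂, rfl⟩ := exists_eq_phase N hlt
    rcases le_or_gt p (4 ^ (N + 1)) with hp | hp
    · have h := advColor_phase_eq_white_iff N (q := q) (p := p + 4 ^ (N + 1)) (by omega) (by omega)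
      rw [← add_assoc] at h
      exact hne (by rw [h, advColor_phase_eq_white_iff N hp₁ hp₂]; omega)
    · have h := advColor_phase_eq_white_iff N (q := q + 1) (p := p - 4 ^ (N + 1)) (by omega)
        (by omega)
      rw [show 4 ^ (N + 1) + 2 * 4 ^ (N + 1) * (q + 1) + (p - 4 ^ (N + 1)) =
        4 ^ (N + 1) + 2 * 4 ^ (N + 1) * q + p + 4 ^ (N + 1) by rw [mul_add]; omega] at h
      exact hne (by rw [h, advColor_phase_eq_white_iff N hp₁ hp₂]; omega)

theorem OPTcost_advColor :
    OPTcost (4 ^ (N + 1) + 2 * 4 ^ (N + 1) * N) (fun _ => 0) (advColor N) = 4 ^ (N + 1) :=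
  OPTcost_eq (isPacking_roundRobin (by positivity) fun _ ht _ => advColor_add_ne N ht)
    fun _ _ hf => hf.le_of_forall_color_eq (Nat.le_add_right _ _) fun t _ ht => by
      rw [advColor_of_le N ht, advColor_of_le N (Nat.one_le_pow _ _ (by norm_num))]

theorem redCount_phase {q d : ℕ} (hqd : q + 1 + d = N) :
    16 * (3 ^ q * 4 ^ d) ≤ 4 ^ (N + 1) ∧
      redCount N (q + 1) + 8 * (3 ^ q * 4 ^ d) = 4 ^ (N + 1) := by
  subst hqd
  have hM : 4 ^ (q + 1 + d + 1) = 16 * (4 ^ q * 4 ^ d) := by ring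
  have hu : 3 ^ q * 4 ^ d ≤ 4 ^ q * 4 ^ d :=
    Nat.mul_le_mul_right _ (Nat.pow_le_pow_left (by norm_num) q)
  have hr : 2 * 3 ^ q * 4 ^ (d + 1) = 8 * (3 ^ q * 4 ^ d) := by ring
  simp only [redCount, Nat.add_sub_cancel, show q + 1 + d - (q + 1) + 1 = d + 1 by omega, hr]
  omega

-- `d` stands for `N - q`, so that no truncated subtraction appears in the exponents.
theorem isAllWhite_advColor (R : BaPRun (4 ^ (N + 1) + 2 * 4 ^ (N + 1) * N) (advColor N))
    (q d : ℕ) (hqd : q + d = N) :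
    R.IsAllWhite (4 ^ (N + 1) + 2 * 4 ^ (N + 1) * q) (2 * 4 ^ (N + 1) - 4 * 3 ^ q * 4 ^ d) := by
  induction q generalizing d with
  | zero =>
    rw [show d = N by omega]
    have h := R.white_open_segment (t₀ := 0) (t₁ := 4 ^ (N + 1)) (Nat.zero_le _)
      (Nat.le_add_right _ _) (fun t _ ht => advColor_of_le N ht) R.isAllWhite_zero
    rw [mul_zero, add_zero, pow_zero, mul_one,
      show 2 * 4 ^ (N + 1) - 4 * 4 ^ N = 4 ^ (N + 1) by rw [pow_succ]; omega]
    simpa using h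
  | succ q ih =>
    have hprev := ih (d + 1) (by omega)
    rw [show 4 * 3 ^ q * 4 ^ (d + 1) = 16 * (3 ^ q * 4 ^ d) by ring] at hprev
    obtain ⟨hu, hred⟩ := redCount_phase N (q := q) (d := d) (by omega)
    have hphase : ∀ t, 4 ^ (N + 1) + 2 * 4 ^ (N + 1) * q < t →
        t ≤ 4 ^ (N + 1) + 2 * 4 ^ (N + 1) * q + 2 * 4 ^ (N + 1) → advColor N t =
          if t - (4 ^ (N + 1) + 2 * 4 ^ (N + 1) * q) ≤ redCount N (q + 1) then .red
          else if t - (4 ^ (N + 1) + 2 * 4 ^ (N + 1) * q) ≤ 4 ^ (N + 1) then .blue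
          else .white := by
      intro t h₁ h₂
      obtain ⟨p, rfl⟩ := Nat.exists_eq_add_of_le h₁.le
      rw [Nat.add_sub_cancel_left]
      exact advColor_phase N (by omega) (by omega)
    have hn : 4 ^ (N + 1) + 2 * 4 ^ (N + 1) * q + 2 * 4 ^ (N + 1) ≤
        4 ^ (N + 1) + 2 * 4 ^ (N + 1) * N := by
      have := Nat.mul_le_mul_left (2 * 4 ^ (N + 1)) (show q + 1 ≤ N by omega)
      rw [Nat.mul_succ] at this
      omega
    have h := R.isAllWhite_phase (u := 3 ^ q * 4 ^ d) hu hn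
      (fun t h₁ h₂ => by rw [hphase t h₁ (by omega), if_pos (by omega)])
      (fun t h₁ h₂ => by rw [hphase t (by omega) (by omega), if_neg (by omega), if_pos (by omega)])
      (fun t h₁ h₂ => by rw [hphase t (by omega) h₂, if_neg (by omega), if_neg (by omega)]) hprev
    rwa [Nat.mul_succ, show 4 * 3 ^ (q + 1) * 4 ^ d = 12 * (3 ^ q * 4 ^ d) by ring, ← add_assoc]

theorem nbins_advColor (R : BaPRun (4 ^ (N + 1) + 2 * 4 ^ (N + 1) * N) (advColor N)) :
    R.nbins (4 ^ (N + 1) + 2 * 4 ^ (N + 1) * N) = 2 * 4 ^ (N + 1) - 4 * 3 ^ N := by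
  simpa using (isAllWhite_advColor N R N 0 (add_zero N)).1

end Instance

theorem cast_two_mul_four_pow_sub (N : ℕ) :
    ((2 * 4 ^ (N + 1) - 4 * 3 ^ N : ℕ) : ℝ) = (2 - (3 / 4) ^ N) * 4 ^ (N + 1) := by
  have h : 4 * 3 ^ N ≤ 2 * 4 ^ (N + 1) := by
    have := Nat.pow_le_pow_left (show 3 ≤ 4 by norm_num) N
    rw [pow_succ]; omega
  rw [Nat.cast_sub h, div_pow, pow_succ]
  push_cast
  field_simp
  ring

/-- for every `N ≥ 2`, on the adversarial zero-size instance of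
`M + 2·M·N` items (`M = 4^(N+1)`) described by `advColor N`, the optimal offline cost is
exactly `M`, while every run of BaP uses exactly `(2 − (3/4)^N)·M = 2·4^(N+1) − 4·3^N` bins.
Consequently, the asymptotic competitive ratio of BaP restricted to zero-size items is at
least `2`: for every `ρ < 2` and every `K`, there is a zero-size instance with `OPT ≥ K` on
which every run of BaP uses at least `ρ·OPT` bins. -/
theorem bap_zero_size_lower_bound_two :
    (∀ N : ℕ, 2 ≤ N →
      OPTcost (4 ^ (N + 1) + 2 * 4 ^ (N + 1) * N) (fun _ => (0 : ℝ)) (advColor N) =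
        4 ^ (N + 1) ∧
      ∀ R : BaPRun (4 ^ (N + 1) + 2 * 4 ^ (N + 1) * N) (advColor N),
        bapCost (fun _ => (0 : ℝ)) R = 2 * 4 ^ (N + 1) - 4 * 3 ^ N) ∧
    (∀ ρ : ℝ, ρ < 2 → ∀ K : ℕ, ∃ (n : ℕ) (c : ℕ → Color3),
      K ≤ OPTcost n (fun _ => (0 : ℝ)) c ∧
      ∀ R : BaPRun n c,
        ρ * (OPTcost n (fun _ => (0 : ℝ)) c : ℝ) ≤ (bapCost (fun _ => (0 : ℝ)) R : ℝ)) := by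
  have hcost : ∀ N, ∀ R : BaPRun (4 ^ (N + 1) + 2 * 4 ^ (N + 1) * N) (advColor N),
      bapCost (fun _ => (0 : ℝ)) R = 2 * 4 ^ (N + 1) - 4 * 3 ^ N := fun N R => by
    rw [R.bapCost_zero, nbins_advColor]
  refine ⟨fun N _ => ⟨OPTcost_advColor N, hcost N⟩, fun ρ hρ K => ?_⟩
  have hratio : ∀ᶠ N in atTop, ρ < 2 - (3 / 4 : ℝ) ^ N :=
    ((tendsto_pow_atTop_nhds_zero_of_lt_one (by norm_num) (by norm_num)).const_sub 2).eventually
      (lt_mem_nhds (by linarith))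
  obtain ⟨N, hNK, hNρ⟩ := ((eventually_ge_atTop K).and hratio).exists
  refine ⟨4 ^ (N + 1) + 2 * 4 ^ (N + 1) * N, advColor N, ?_, fun R => ?_⟩
  · rw [OPTcost_advColor]
    exact hNK.trans (N.le_succ.trans (Nat.lt_pow_self (by norm_num)).le)
  · rw [OPTcost_advColor, hcost N R, cast_two_mul_four_pow_sub]
    push_cast
    exact mul_le_mul_of_nonneg_right hNρ.le (by positivity)
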